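/- Let W be the real vector space of n×n Hermitian complex matrices and let ξ ∈ W satisfy Tr(ξ) = 1. Let f, g : W → ℝ be functions differentiable at ξ, and suppose f vanishes on the whole affine hyperplane {η ∈ W : Tr(η) = 1}. Let F, G ∈ W be matrices representing the derivatives at ξ, i.e. Df(ξ)(η) = Tr(Fη) and Dg(ξ)(η) = Tr(Gη) for all η ∈ W. Then Tr(ξ·[[F, G]]) = 0. (This is the statement that the ideal of functions vanishing on the trace-one hyperplane is an ideal for the Poisson bracket {f, g}(ξ) = Tr(ξ·[[F, G]]) associated with the Lie bivector Λ̃, so the bracket reduces to the hyperplane.) -/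

import Mathlib

open Matrix

attribute [local instance] Matrix.frobeniusNormedAddCommGroup Matrix.frobeniusNormedSpace

/-- The Lie product of two complex matrices: `[[x, y]] = (i/2)(xy − yx)`. -/
noncomputable def lieProd {n : ℕ} (x y : Matrix (Fin n) (Fin n) ℂ) :
    Matrix (Fin n) (Fin n) ℂ :=
  (Complex.I / 2) • (x * y - y * x)

/-!
`f` is constant on the trace-one Hermitian hyperplane, so its derivative at `ξ` kills every
traceless Hermitian direction; `Tr(Fη) = 0` for those `η`. Cyclicity of the trace gives
`Tr(ξ [[F, G]]) = Tr(F [[G, ξ]])`, and `[[G, ξ]]` is such a direction: it is Hermitian (the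
factor `i` compensates for the commutator being skew-Hermitian) and traceless.
-/

theorem fderiv_apply_eq_zero_of_forall_add_smul {𝕜 E F : Type*} [NontriviallyNormedField 𝕜]
    [NormedAddCommGroup E] [NormedSpace 𝕜 E] [NormedAddCommGroup F] [NormedSpace 𝕜 F]
    {f : E → F} {x v : E} (hf : DifferentiableAt 𝕜 f x) (hline : ∀ t : 𝕜, f (x + t • v) = f x) :
    fderiv 𝕜 f x v = 0 := by
  rw [← hf.lineDeriv_eq_fderiv, lineDeriv, funext hline, deriv_const]

theorem Matrix.IsHermitian.isSelfAdjoint_trace_mul {n R : Type*} [Fintype n] [CommRing R]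
    [StarRing R] {A B : Matrix n n R} (hA : A.IsHermitian) (hB : B.IsHermitian) :
    IsSelfAdjoint (A * B).trace := by
  rw [IsSelfAdjoint, ← trace_conjTranspose, conjTranspose_mul, hA.eq, hB.eq, trace_mul_comm]

namespace lieProd

variable {n : ℕ}

theorem isHermitian {x y : Matrix (Fin n) (Fin n) ℂ} (hx : x.IsHermitian) (hy : y.IsHermitian) :
    (lieProd x y).IsHermitian := by
  have hstar : star (Complex.I / 2) = -(Complex.I / 2) := by
    simp [neg_div]
  rw [IsHermitian, lieProd, conjTranspose_smul, conjTranspose_sub, conjTranspose_mul,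
    conjTranspose_mul, hx.eq, hy.eq, hstar, neg_smul, ← smul_neg, neg_sub]

theorem trace_eq_zero (x y : Matrix (Fin n) (Fin n) ℂ) : (lieProd x y).trace = 0 := by
  rw [lieProd, trace_smul, trace_sub, trace_mul_comm, sub_self, smul_zero]

theorem trace_mul_cycle (x y z : Matrix (Fin n) (Fin n) ℂ) :
    (x * lieProd y z).trace = (y * lieProd z x).trace := by
  simp only [lieProd, Matrix.mul_smul, trace_smul, Matrix.mul_sub, trace_sub, ← Matrix.mul_assoc]
  rw [Matrix.trace_mul_cycle x y z, Matrix.trace_mul_cycle x z y, Matrix.trace_mul_cycle z x y]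

end lieProd

theorem poisson_bracket_reduces_general {n : ℕ}
    (ξ : Matrix (Fin n) (Fin n) ℂ) (hξ : ξ.IsHermitian) (hξtr : ξ.trace = 1)
    (f : Matrix (Fin n) (Fin n) ℂ → ℝ)
    (hf : DifferentiableAt ℝ f ξ)
    (hfvan : ∀ η : Matrix (Fin n) (Fin n) ℂ, η.IsHermitian → η.trace = 1 → f η = 0)
    (F G : Matrix (Fin n) (Fin n) ℂ) (hF : F.IsHermitian) (hG : G.IsHermitian)
    (hdf : ∀ η : Matrix (Fin n) (Fin n) ℂ, η.IsHermitian →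
      fderiv ℝ f ξ η = (Matrix.trace (F * η)).re) :
    Matrix.trace (ξ * lieProd F G) = 0 := by
  set η := lieProd G ξ
  have hη : η.IsHermitian := lieProd.isHermitian hG hξ
  have hvan_line (t : ℝ) : f (ξ + t • η) = f ξ := by
    have hherm : (ξ + t • η).IsHermitian := hξ.add (hη.smul (IsSelfAdjoint.all t))
    have htr : (ξ + t • η).trace = 1 := by
      rw [trace_add, trace_smul, lieProd.trace_eq_zero, smul_zero, add_zero, hξtr]
    rw [hfvan _ hherm htr, hfvan ξ hξ hξtr]
  have hre : (F * η).trace.re = 0 := by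
    rw [← hdf η hη]
    exact fderiv_apply_eq_zero_of_forall_add_smul hf hvan_line
  have him : (F * η).trace.im = 0 :=
    Complex.conj_eq_iff_im.mp (hF.isSelfAdjoint_trace_mul hη)
  rw [lieProd.trace_mul_cycle]
  exact Complex.ext hre him

/-- On the real vector space of Hermitian matrices, if `f` vanishes on the affine
hyperplane of trace-one Hermitian matrices, `ξ` is a trace-one Hermitian point, and the
derivatives of `f` and `g` at `ξ` are represented via the trace pairing by Hermitian
matrices `F` and `G`, then `Tr(ξ·[[F, G]]) = 0`: the ideal of functions vanishing on
the trace-one hyperplane is an ideal for the Poisson bracket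
`{f, g}(ξ) = Tr(ξ·[[F, G]])`, so the bracket reduces to the hyperplane. -/
theorem poisson_bracket_reduces {n : ℕ}
    (ξ : Matrix (Fin n) (Fin n) ℂ) (hξ : ξ.IsHermitian) (hξtr : ξ.trace = 1)
    (f g : Matrix (Fin n) (Fin n) ℂ → ℝ)
    (hf : DifferentiableAt ℝ f ξ) (hg : DifferentiableAt ℝ g ξ)
    (hfvan : ∀ η : Matrix (Fin n) (Fin n) ℂ, η.IsHermitian → η.trace = 1 → f η = 0)
    (F G : Matrix (Fin n) (Fin n) ℂ) (hF : F.IsHermitian) (hG : G.IsHermitian)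
    (hdf : ∀ η : Matrix (Fin n) (Fin n) ℂ, η.IsHermitian →
      fderiv ℝ f ξ η = (Matrix.trace (F * η)).re)
    (hdg : ∀ η : Matrix (Fin n) (Fin n) ℂ, η.IsHermitian →
      fderiv ℝ g ξ η = (Matrix.trace (G * η)).re) :
    Matrix.trace (ξ * lieProd F G) = 0 :=
  poisson_bracket_reduces_general ξ hξ hξtr f hf hfvan F G hF hG hdf
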